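/- Let H₁, …, Hₙ be Hilbert spaces and T an n×n upper triangular block operator matrix with diagonal entries D₁, …, Dₙ acting on H₁ ⊕ ⋯ ⊕ Hₙ. Then σ_{SF+}(D₁) ⊆ σ_{SF+}(T) and σ_{SF−}(Dₙ) ⊆ σ_{SF−}(T). -/

import Mathlib

noncomputable section
universe u

open Cardinal

/-- The nullity `α(T)`: the dimension of the kernel of `T`. -/
def nullity {E F : Type*} [NormedAddCommGroup E] [NormedSpace ℂ E]
    [NormedAddCommGroup F] [NormedSpace ℂ F] (T : E →L[ℂ] F) : Cardinal :=
  Module.rank ℂ (LinearMap.ker (T : E →ₗ[ℂ] F))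

/-- The deficiency `β(T)`: the codimension of the range of `T`. -/
def deficiency {E F : Type*} [NormedAddCommGroup E] [NormedSpace ℂ E]
    [NormedAddCommGroup F] [NormedSpace ℂ F] (T : E →L[ℂ] F) : Cardinal :=
  Module.rank ℂ (F ⧸ LinearMap.range (T : E →ₗ[ℂ] F))

/-- Upper semi-Fredholm: finite-dimensional kernel and closed range. -/
def UpperSemiFredholm {E F : Type*} [NormedAddCommGroup E] [NormedSpace ℂ E]
    [NormedAddCommGroup F] [NormedSpace ℂ F] (T : E →L[ℂ] F) : Prop :=
  nullity T < ℵ₀ ∧ IsClosed ((LinearMap.range (T : E →ₗ[ℂ] F) : Submodule ℂ F) : Set F)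

/-- Lower semi-Fredholm: range of finite codimension. -/
def LowerSemiFredholm {E F : Type*} [NormedAddCommGroup E] [NormedSpace ℂ E]
    [NormedAddCommGroup F] [NormedSpace ℂ F] (T : E →L[ℂ] F) : Prop :=
  deficiency T < ℵ₀

/-- Fredholm: finite nullity and finite deficiency. -/
def IsFredholmOp {E F : Type*} [NormedAddCommGroup E] [NormedSpace ℂ E]
    [NormedAddCommGroup F] [NormedSpace ℂ F] (T : E →L[ℂ] F) : Prop :=
  nullity T < ℵ₀ ∧ deficiency T < ℵ₀

/-- The `n × n` upper triangular block operator matrix with entries `A i j : H j →L[ℂ] H i`. -/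
def blockOp {n : ℕ} {H : Fin (n + 1) → Type u} [∀ i, NormedAddCommGroup (H i)]
    [∀ i, NormedSpace ℂ (H i)] (A : ∀ i j, H j →L[ℂ] H i) :
    (∀ i, H i) →L[ℂ] (∀ i, H i) :=
  ContinuousLinearMap.pi fun i => ∑ j, (A i j).comp (ContinuousLinearMap.proj j)

/-- closed subspace ⊔ finite-dimensional subspace is closed -/
lemma aux_isClosed_sup {E : Type*} [NormedAddCommGroup E] [NormedSpace ℂ E]
    (M F : Submodule ℂ E) (hM : IsClosed (M : Set E)) [FiniteDimensional ℂ F] :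
    IsClosed ((F ⊔ M : Submodule ℂ E) : Set E) := by
  haveI : IsClosed (M : Set E) := hM
  have hq : Continuous (M.mkQ) := continuous_quot_mk
  have hFD : FiniteDimensional ℂ (Submodule.map M.mkQ F) := inferInstance
  have hclosed : IsClosed ((Submodule.map M.mkQ F : Submodule ℂ (E ⧸ M)) : Set (E ⧸ M)) :=
    Submodule.closed_of_finiteDimensional _
  have heq : (F ⊔ M : Submodule ℂ E) = Submodule.comap M.mkQ (Submodule.map M.mkQ F) := by
    rw [Submodule.comap_map_eq, Submodule.ker_mkQ]
  rw [heq]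
  exact hclosed.preimage hq

/-- If `T` is bounded below on a closed finite-codimensional subspace, its range is closed. -/
lemma aux_closedRange {E F : Type*} [NormedAddCommGroup E] [NormedSpace ℂ E]
    [CompleteSpace E] [NormedAddCommGroup F] [NormedSpace ℂ F] (T : E →L[ℂ] F) (N : Submodule ℂ E)
    (hN : IsClosed (N : Set E)) [FiniteDimensional ℂ (E ⧸ N)]
    (C : ℝ) (hbd : ∀ x ∈ N, ‖x‖ ≤ C * ‖T x‖) :
    IsClosed ((LinearMap.range (T : E →ₗ[ℂ] F) : Submodule ℂ F) : Set F) := by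
  obtain ⟨G, hG⟩ := Submodule.exists_isCompl N
  haveI : FiniteDimensional ℂ G :=
    (Submodule.quotientEquivOfIsCompl N G hG).finiteDimensional
  -- the restriction of T to N
  set g : N →L[ℂ] F := T.comp N.subtypeL with hg
  have hb : ∀ y : N, ‖y‖ ≤ (C.toNNReal : ℝ) * ‖g y‖ := by
    intro y
    calc ‖y‖ = ‖(y : E)‖ := rfl
    _ ≤ C * ‖T y‖ := hbd y y.2
    _ ≤ (C.toNNReal : ℝ) * ‖T y‖ :=
        mul_le_mul_of_nonneg_right (Real.le_coe_toNNReal C) (norm_nonneg _)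
    _ = (C.toNNReal : ℝ) * ‖g y‖ := rfl
  have hanti : AntilipschitzWith C.toNNReal g := g.antilipschitz_of_bound hb
  haveI : CompleteSpace N := hN.completeSpace_coe
  have hclosed : IsClosed (Set.range g) := hanti.isClosed_range g.uniformContinuous
  have hrange : Set.range ⇑g = ((Submodule.map (T : E →ₗ[ℂ] F) N : Submodule ℂ F) : Set F) := by
    ext y
    simp only [Submodule.map_coe, hg, ContinuousLinearMap.coe_comp', Function.comp_apply,
      Set.mem_range, Set.mem_image]
    constructor
    · rintro ⟨x, rfl⟩; exact ⟨x, x.2, rfl⟩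
    · rintro ⟨x, hx, rfl⟩; exact ⟨⟨x, hx⟩, rfl⟩
  have hmapN : IsClosed ((Submodule.map (T : E →ₗ[ℂ] F) N : Submodule ℂ F) : Set F) := hrange ▸ hclosed
  have : LinearMap.range (T : E →ₗ[ℂ] F) = Submodule.map (T : E →ₗ[ℂ] F) G ⊔ Submodule.map (T : E →ₗ[ℂ] F) N := by
    rw [← Submodule.map_sup, sup_comm, hG.sup_eq_top, Submodule.map_top]
  rw [this]
  have hGeq : Submodule.map (T : E →ₗ[ℂ] F) G = Submodule.map (T.toLinearMap) G := rfl
  haveI : FiniteDimensional ℂ (Submodule.map (T : E →ₗ[ℂ] F) G) := by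
    rw [hGeq]; infer_instance
  exact aux_isClosed_sup _ _ hmapN

/-- An upper semi-Fredholm operator is bounded below on a closed subspace of finite codimension. -/
lemma aux_bddBelow {E F : Type*} [NormedAddCommGroup E] [NormedSpace ℂ E] [CompleteSpace E]
    [NormedAddCommGroup F] [NormedSpace ℂ F] [CompleteSpace F] (S : E →L[ℂ] F)
    [FiniteDimensional ℂ (LinearMap.ker (S : E →ₗ[ℂ] F))]
    (h2 : IsClosed ((LinearMap.range (S : E →ₗ[ℂ] F) : Submodule ℂ F) : Set F)) :
    ∃ Q : Submodule ℂ E, IsClosed (Q : Set E) ∧ FiniteDimensional ℂ (E ⧸ Q) ∧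
      ∃ C : ℝ, ∀ x ∈ Q, ‖x‖ ≤ C * ‖S x‖ := by
  set K := LinearMap.ker (S : E →ₗ[ℂ] F) with hK
  obtain ⟨Q, hQc, hQ⟩ :=
    (Submodule.ClosedComplemented.of_finiteDimensional K).exists_isClosed_isCompl
  haveI : FiniteDimensional ℂ (E ⧸ Q) :=
    ((Submodule.quotientEquivOfIsCompl Q K hQ.symm).symm).finiteDimensional
  refine ⟨Q, hQc, inferInstance, ?_⟩
  haveI : CompleteSpace Q := hQc.completeSpace_coe
  haveI : CompleteSpace (LinearMap.range (S : E →ₗ[ℂ] F)) := h2.completeSpace_coe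
  set g : Q →L[ℂ] LinearMap.range (S : E →ₗ[ℂ] F) :=
    (S.comp Q.subtypeL).codRestrict (LinearMap.range (S : E →ₗ[ℂ] F))
      (fun x => LinearMap.mem_range_self _ _) with hg
  have hker : LinearMap.ker (g : Q →ₗ[ℂ] LinearMap.range (S : E →ₗ[ℂ] F)) = ⊥ := by
    rw [LinearMap.ker_eq_bot']
    intro x hx
    have hSx : S x = 0 := by
      have := congrArg Subtype.val hx
      exact this
    have hxK : (x : E) ∈ K := hSx
    have : (x : E) ∈ K ⊓ Q := ⟨hxK, x.2⟩
    rw [hQ.inf_eq_bot] at this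
    exact Subtype.ext this
  have hrange : LinearMap.range (g : Q →ₗ[ℂ] LinearMap.range (S : E →ₗ[ℂ] F)) = ⊤ := by
    rw [LinearMap.range_eq_top]
    rintro ⟨y, hy⟩
    obtain ⟨x, rfl⟩ := hy
    have hx : x ∈ K ⊔ Q := by rw [hQ.sup_eq_top]; trivial
    obtain ⟨k, hk, q, hq, rfl⟩ := Submodule.mem_sup.1 hx
    refine ⟨⟨q, hq⟩, ?_⟩
    apply Subtype.ext
    have hk0 : S k = 0 := hk
    simp [hg, map_add, hk0]
    rfl
  set e := ContinuousLinearEquiv.ofBijective g hker hrange with he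
  refine ⟨‖(e.symm : LinearMap.range (S : E →ₗ[ℂ] F) →L[ℂ] Q)‖, fun x hx => ?_⟩
  have h1 : e ⟨x, hx⟩ = g ⟨x, hx⟩ := rfl
  calc ‖x‖ = ‖e.symm (e ⟨x, hx⟩)‖ := by rw [e.symm_apply_apply]; rfl
  _ ≤ ‖(e.symm : LinearMap.range (S : E →ₗ[ℂ] F) →L[ℂ] Q)‖ * ‖e ⟨x, hx⟩‖ :=
      (e.symm : LinearMap.range (S : E →ₗ[ℂ] F) →L[ℂ] Q).le_opNorm _
  _ = ‖(e.symm : LinearMap.range (S : E →ₗ[ℂ] F) →L[ℂ] Q)‖ * ‖S x‖ := by rw [h1]; rfl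

lemma blockOp_apply {n : ℕ} {H : Fin (n + 1) → Type u} [∀ i, NormedAddCommGroup (H i)]
    [∀ i, NormedSpace ℂ (H i)] (A : ∀ i j, H j →L[ℂ] H i) (x : ∀ i, H i) (i : Fin (n+1)) :
    blockOp A x i = ∑ j, A i j (x j) := by
  simp [blockOp]

theorem stmt_18 {n : ℕ} {H : Fin (n + 1) → Type u} [∀ i, NormedAddCommGroup (H i)]
    [∀ i, InnerProductSpace ℂ (H i)] [∀ i, CompleteSpace (H i)]
    (D : ∀ i, H i →L[ℂ] H i) (A : ∀ i j, H j →L[ℂ] H i)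
    (hdiag : ∀ i, A i i = D i)
    (hlow : ∀ i j, j < i → A i j = 0) :
    {z : ℂ | ¬ UpperSemiFredholm (z • (1 : H 0 →L[ℂ] H 0) - D 0)} ⊆
        {z : ℂ | ¬ UpperSemiFredholm
          (z • (1 : (∀ i, H i) →L[ℂ] (∀ i, H i)) - blockOp A)} ∧
      {z : ℂ | ¬ LowerSemiFredholm (z • (1 : H (Fin.last n) →L[ℂ] H (Fin.last n)) - D (Fin.last n))} ⊆
        {z : ℂ | ¬ LowerSemiFredholm
          (z • (1 : (∀ i, H i) →L[ℂ] (∀ i, H i)) - blockOp A)} := by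
  constructor
  · -- upper semi-Fredholm part
    intro z hz
    simp only [Set.mem_setOf_eq] at hz ⊢
    intro hS
    apply hz
    set S : (∀ i, H i) →L[ℂ] (∀ i, H i) :=
      z • (1 : (∀ i, H i) →L[ℂ] (∀ i, H i)) - blockOp A with hSdef
    set D' : H 0 →L[ℂ] H 0 := z • (1 : H 0 →L[ℂ] H 0) - D 0 with hD'def
    set ι : H 0 →L[ℂ] (∀ i, H i) :=
      { toLinearMap := LinearMap.single ℂ H 0, cont := continuous_single 0 } with hidef
    have hιcoe : ∀ x : H 0, ι x = Pi.single 0 x := fun _ => rfl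
    have hιinj : Function.Injective ι := fun a b hab => Pi.single_injective 0 hab
    have hιnorm : ∀ x : H 0, ‖ι x‖ = ‖x‖ := fun x => Pi.norm_single x
    have hblock : ∀ x : H 0, blockOp A (ι x) = ι (D 0 x) := by
      intro x
      have h1 : ∀ i, blockOp A (ι x) i = A i 0 x := by
        intro i
        rw [blockOp_apply, Finset.sum_eq_single 0]
        · show A i 0 (Pi.single 0 x 0) = A i 0 x
          rw [Pi.single_eq_same]
        · intro j _ hj
          show A i j (Pi.single 0 x j) = 0
          rw [Pi.single_eq_of_ne hj, map_zero]
        · intro h; exact absurd (Finset.mem_univ 0) h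
      funext i
      rcases eq_or_ne i 0 with rfl | hi
      · rw [h1, hdiag 0, hιcoe, Pi.single_eq_same]
      · rw [h1, hlow i 0 (Fin.pos_of_ne_zero hi), hιcoe, Pi.single_eq_of_ne hi]
        rfl
    have hkey : ∀ x : H 0, S (ι x) = ι (D' x) := by
      intro x
      rw [hSdef, hD'def]
      simp only [ContinuousLinearMap.sub_apply, ContinuousLinearMap.smul_apply,
        ContinuousLinearMap.one_apply, map_sub, map_smul]
      rw [hblock]
    constructor
    · -- nullity
      have hmem : ∀ x : LinearMap.ker (D' : H 0 →ₗ[ℂ] H 0), ι (x : H 0) ∈ LinearMap.ker (S : (∀ i, H i) →ₗ[ℂ] (∀ i, H i)) := by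
        intro x
        have hx : D' (x : H 0) = 0 := x.2
        show S (ι (x : H 0)) = 0
        rw [hkey, hx, map_zero]
      set k : LinearMap.ker (D' : H 0 →ₗ[ℂ] H 0) →ₗ[ℂ] LinearMap.ker (S : (∀ i, H i) →ₗ[ℂ] (∀ i, H i)) :=
        LinearMap.codRestrict (LinearMap.ker (S : (∀ i, H i) →ₗ[ℂ] (∀ i, H i)))
          ((ι : H 0 →ₗ[ℂ] ∀ i, H i).comp (LinearMap.ker (D' : H 0 →ₗ[ℂ] H 0)).subtype) hmem with hk
      have hkinj : Function.Injective k := by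
        intro a b hab
        have : ι (a : H 0) = ι (b : H 0) := congrArg Subtype.val hab
        exact Subtype.ext (hιinj this)
      exact lt_of_le_of_lt (LinearMap.rank_le_of_injective k hkinj) hS.1
    · -- closed range
      haveI hfd : FiniteDimensional ℂ (LinearMap.ker (S : (∀ i, H i) →ₗ[ℂ] (∀ i, H i))) := Module.rank_lt_aleph0_iff.mp hS.1
      obtain ⟨Q, hQc, hQfd, C, hC⟩ := aux_bddBelow S hS.2
      set N : Submodule ℂ (H 0) := Submodule.comap (ι : H 0 →ₗ[ℂ] ∀ i, H i) Q with hN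
      have hNc : IsClosed (N : Set (H 0)) := hQc.preimage ι.continuous
      set φ : (H 0 ⧸ N) →ₗ[ℂ] ((∀ i, H i) ⧸ Q) :=
        Submodule.mapQ N Q (ι : H 0 →ₗ[ℂ] ∀ i, H i) le_rfl with hφ
      have hφinj : Function.Injective φ := by
        rw [injective_iff_map_eq_zero]
        intro a ha
        obtain ⟨x, rfl⟩ := Submodule.Quotient.mk_surjective N a
        rw [hφ, Submodule.mapQ_apply, Submodule.Quotient.mk_eq_zero] at ha
        rw [Submodule.Quotient.mk_eq_zero]
        exact ha
      haveI := hQfd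
      haveI : FiniteDimensional ℂ (H 0 ⧸ N) := FiniteDimensional.of_injective φ hφinj
      refine aux_closedRange D' N hNc C ?_
      intro x hx
      have hQx : ι x ∈ Q := hx
      have := hC (ι x) hQx
      rwa [hιnorm, hkey, hιnorm] at this
  · -- lower semi-Fredholm part
    intro z hz
    simp only [Set.mem_setOf_eq] at hz ⊢
    intro hS
    apply hz
    set S : (∀ i, H i) →L[ℂ] (∀ i, H i) :=
      z • (1 : (∀ i, H i) →L[ℂ] (∀ i, H i)) - blockOp A with hSdef
    set Dl : H (Fin.last n) →L[ℂ] H (Fin.last n) :=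
      z • (1 : H (Fin.last n) →L[ℂ] H (Fin.last n)) - D (Fin.last n) with hDl
    set π : (∀ i, H i) →L[ℂ] H (Fin.last n) := ContinuousLinearMap.proj (Fin.last n) with hπ
    have hkey : ∀ x : ∀ i, H i, S x (Fin.last n) = Dl (x (Fin.last n)) := by
      intro x
      have h1 : blockOp A x (Fin.last n) = D (Fin.last n) (x (Fin.last n)) := by
        rw [blockOp_apply, Finset.sum_eq_single (Fin.last n)]
        · rw [hdiag]
        · intro j _ hj
          rw [hlow _ _ (lt_of_le_of_ne (Fin.le_last j) hj), ContinuousLinearMap.zero_apply]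
        · intro h; exact absurd (Finset.mem_univ _) h
      rw [hSdef, hDl]
      simp only [ContinuousLinearMap.sub_apply, ContinuousLinearMap.smul_apply,
        ContinuousLinearMap.one_apply, Pi.sub_apply, Pi.smul_apply, h1]
    have hle : LinearMap.range (S : (∀ i, H i) →ₗ[ℂ] (∀ i, H i)) ≤
        Submodule.comap (π : (∀ i, H i) →ₗ[ℂ] H (Fin.last n)) (LinearMap.range (Dl : H (Fin.last n) →ₗ[ℂ] H (Fin.last n))) := by
      rintro y ⟨x, rfl⟩
      exact ⟨x (Fin.last n), (hkey x).symm⟩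
    set φ : ((∀ i, H i) ⧸ LinearMap.range (S : (∀ i, H i) →ₗ[ℂ] (∀ i, H i))) →ₗ[ℂ] (H (Fin.last n) ⧸ LinearMap.range (Dl : H (Fin.last n) →ₗ[ℂ] H (Fin.last n))) :=
      Submodule.mapQ _ _ (π : (∀ i, H i) →ₗ[ℂ] H (Fin.last n)) hle with hφ
    have hφsurj : Function.Surjective φ := by
      intro b
      obtain ⟨y, rfl⟩ := Submodule.Quotient.mk_surjective _ b
      refine ⟨Submodule.Quotient.mk (Pi.single (Fin.last n) y), ?_⟩
      rw [hφ, Submodule.mapQ_apply]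
      congr 1
      show (Pi.single (Fin.last n) y : ∀ i, H i) (Fin.last n) = y
      rw [Pi.single_eq_same]
    exact lt_of_le_of_lt (LinearMap.rank_le_of_surjective φ hφsurj) hS
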